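/- Let v ∈ V and let X, Y, W ∈ F be sets all containing v such that Max(X) is defined and |X| ≤ |Y| ≤ |W| ≤ |Max(X)|. Then X, Y, W and Max(X) all belong to the same overlap class, i.e., they lie in the same connected component of the overlap graph OG(F). -/

import Mathlib

/-- Two sets `X` and `Y` overlap if `X ∩ Y ≠ ∅`, `X \ Y ≠ ∅` and `Y \ X ≠ ∅`. -/
def Overlaps {V : Type*} [DecidableEq V] (X Y : Finset V) : Prop :=
  (X ∩ Y).Nonempty ∧ (X \ Y).Nonempty ∧ (Y \ X).Nonempty

/-- The overlap graph of a family `F`: vertices are the members of `F`,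
two sets are adjacent iff they overlap. -/
def OG {V : Type*} [DecidableEq V] (F : Finset (Finset V)) :
    SimpleGraph {X : Finset V // X ∈ F} where
  Adj A B := Overlaps (A : Finset V) (B : Finset V)
  symm := by
    constructor
    rintro A B ⟨h1, h2, h3⟩
    exact ⟨by rwa [Finset.inter_comm], h3, h2⟩
  loopless := by
    constructor
    rintro A ⟨-, h2, -⟩
    simp at h2

/-!
A set `Z` of size between `|X|` and `|Max(X)|` that meets `X` either overlaps `X`, or
contains `X`. In the second case `Z` meets `Max(X)` inside `X`, and it is not contained in
`Max(X)` because `X` is not; as `|Z| ≤ |Max(X)|`, `Z` overlaps `Max(X)`. Either way `Z` is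
joined to `Max(X)` in the overlap graph.
-/

section

open Finset

variable {V : Type*} [DecidableEq V]

theorem Overlaps.symm {X Y : Finset V} (h : Overlaps X Y) : Overlaps Y X :=
  ⟨inter_comm X Y ▸ h.1, h.2.2, h.2.1⟩

theorem overlaps_or_subset_of_card_le {X Z : Finset V} (hXZ : (X ∩ Z).Nonempty)
    (hcard : #X ≤ #Z) : Overlaps X Z ∨ X ⊆ Z := by
  by_cases hsub : X ⊆ Z
  · exact Or.inr hsub
  refine Or.inl ⟨hXZ, sdiff_nonempty.mpr hsub, sdiff_nonempty.mpr fun hZX => hsub ?_⟩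
  exact (eq_of_subset_of_card_le hZX hcard).ge

theorem Overlaps.overlaps_or_overlaps_of_card_le {X Z M : Finset V} (hMX : Overlaps M X)
    (hXZ : (X ∩ Z).Nonempty) (hXZcard : #X ≤ #Z) (hZMcard : #Z ≤ #M) :
    Overlaps X Z ∨ Overlaps Z M := by
  obtain hXZ | hsub := overlaps_or_subset_of_card_le hXZ hXZcard
  · exact Or.inl hXZ
  have hZM : (Z ∩ M).Nonempty :=
    (inter_comm M X ▸ hMX.1).mono (inter_subset_inter hsub Subset.rfl)
  obtain hZM | hZsubM := overlaps_or_subset_of_card_le hZM hZMcard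
  · exact Or.inr hZM
  exact absurd (hsub.trans hZsubM) (sdiff_nonempty.mp hMX.2.2)

theorem OG.reachable_of_card_between {F : Finset (Finset V)} {X Z M : {X : Finset V // X ∈ F}}
    (hMX : (OG F).Adj M X) (hXZ : ((X : Finset V) ∩ Z).Nonempty)
    (hXZcard : #(X : Finset V) ≤ #(Z : Finset V))
    (hZMcard : #(Z : Finset V) ≤ #(M : Finset V)) :
    (OG F).Reachable Z M := by
  obtain hXZ | hZM := Overlaps.overlaps_or_overlaps_of_card_le hMX hXZ hXZcard hZMcard
  · exact (SimpleGraph.Adj.reachable (G := OG F) hXZ.symm).trans hMX.symm.reachable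
  · exact SimpleGraph.Adj.reachable (G := OG F) hZM

end

theorem stmt1_general {V : Type*} [DecidableEq V]
    (F : Finset (Finset V))
    (v : V)
    (X Y W M : {X : Finset V // X ∈ F})
    (hvX : v ∈ (X : Finset V)) (hvY : v ∈ (Y : Finset V)) (hvW : v ∈ (W : Finset V))
    (hMover : Overlaps (M : Finset V) (X : Finset V))
    (h1 : (X : Finset V).card ≤ (Y : Finset V).card)
    (h2 : (Y : Finset V).card ≤ (W : Finset V).card)
    (h3 : (W : Finset V).card ≤ (M : Finset V).card) :
    (OG F).Reachable X Y ∧ (OG F).Reachable Y W ∧ (OG F).Reachable W M := by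
  have hMX : (OG F).Adj M X := hMover
  have hXM : (OG F).Reachable X M := hMX.symm.reachable
  have hYM : (OG F).Reachable Y M :=
    OG.reachable_of_card_between hMX ⟨v, Finset.mem_inter.mpr ⟨hvX, hvY⟩⟩ h1 (h2.trans h3)
  have hWM : (OG F).Reachable W M :=
    OG.reachable_of_card_between hMX ⟨v, Finset.mem_inter.mpr ⟨hvX, hvW⟩⟩ (h1.trans h2) h3
  exact ⟨hXM.trans hYM.symm, hYM.trans hWM.symm, hWM⟩

/-- Let `v ∈ V` and `X, Y, W ∈ F` all containing `v`, with `Max(X)` defined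
(here `M`) and `|X| ≤ |Y| ≤ |W| ≤ |Max(X)|`. Then `X`, `Y`, `W` and `Max(X)` all
belong to the same connected component of the overlap graph. -/
theorem stmt1 {V : Type*} [Fintype V] [DecidableEq V]
    (F : Finset (Finset V))
    (lo : LinearOrder {X : Finset V // X ∈ F})
    (hLF : ∀ A B : {X : Finset V // X ∈ F},
      (B : Finset V).card < (A : Finset V).card → lo.lt A B)
    (v : V)
    (X Y W M : {X : Finset V // X ∈ F})
    (hvX : v ∈ (X : Finset V)) (hvY : v ∈ (Y : Finset V)) (hvW : v ∈ (W : Finset V))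
    (hMover : Overlaps (M : Finset V) (X : Finset V))
    (hMcard : (X : Finset V).card ≤ (M : Finset V).card)
    (hMleast : ∀ Z : {X : Finset V // X ∈ F},
      (X : Finset V).card ≤ (Z : Finset V).card →
      Overlaps (Z : Finset V) (X : Finset V) → lo.le M Z)
    (h1 : (X : Finset V).card ≤ (Y : Finset V).card)
    (h2 : (Y : Finset V).card ≤ (W : Finset V).card)
    (h3 : (W : Finset V).card ≤ (M : Finset V).card) :
    (OG F).Reachable X Y ∧ (OG F).Reachable Y W ∧ (OG F).Reachable W M :=
  stmt1_general F v X Y W M hvX hvY hvW hMover h1 h2 h3
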